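/- Let Ω be a countable set, G a closed subgroup of S = Sym(Ω), and (Δᵢ)_{i∈I} a family of subsets of Ω. Then either (i) there exists a finite set Γ ⊆ Ω such that every element of G_(Γ) carries Δᵢ to itself for all but finitely many i ∈ I, or (ii) there exists an element g ∈ G with Δᵢg ≠ Δᵢ for infinitely many i ∈ I. Moreover, if all the Δᵢ are finite, then in alternative (i) 'all but finitely many i ∈ I' can be strengthened to 'all i ∈ I'. -/

import Mathlib

open scoped Cardinal ENNReal

universe u

variable {Ω : Type u}

/-- The pointwise stabilizer of a set `s` inside a subgroup `G` of `Sym(Ω)`. -/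
def pstab (G : Subgroup (Equiv.Perm Ω)) (s : Set Ω) : Subgroup (Equiv.Perm Ω) where
  carrier := {g | g ∈ G ∧ ∀ x ∈ s, g x = x}
  one_mem' := ⟨G.one_mem, fun _ _ => rfl⟩
  mul_mem' := by
    rintro a b ⟨haG, ha⟩ ⟨hbG, hb⟩
    refine ⟨G.mul_mem haG hbG, fun x hx => ?_⟩
    simp [Equiv.Perm.mul_apply, hb x hx, ha x hx]
  inv_mem' := by
    rintro a ⟨haG, ha⟩
    refine ⟨G.inv_mem haG, fun x hx => ?_⟩
    conv_lhs => rw [← ha x hx]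
    exact Equiv.symm_apply_apply a x

/-- For a family `A` of subsets of `Ω`, the subgroup of permutations carrying each
member of `A` onto itself. -/
def SAgrp (A : Set (Set Ω)) : Subgroup (Equiv.Perm Ω) where
  carrier := {f | ∀ s ∈ A, (f : Ω → Ω) '' s = s}
  one_mem' := fun s _ => by simp
  mul_mem' := by
    intro a b ha hb s hs
    rw [Equiv.Perm.coe_mul, Set.image_comp, hb s hs, ha s hs]
  inv_mem' := by
    intro a ha s hs
    conv_lhs => rw [← ha s hs]
    rw [← Set.image_comp]
    simp

/-- `G₁ ≼_κ G₂` : there is a set `U` of permutations of cardinality `< κ` with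
`G₁ ≤ ⟨G₂ ∪ U⟩`. -/
def Prec (κ : Cardinal.{u}) (G₁ G₂ : Subgroup (Equiv.Perm Ω)) : Prop :=
  ∃ U : Set (Equiv.Perm Ω), #U < κ ∧
    G₁ ≤ Subgroup.closure ((G₂ : Set (Equiv.Perm Ω)) ∪ U)

/-- `G₁ ≈_κ G₂`. -/
def CApprox (κ : Cardinal.{u}) (G₁ G₂ : Subgroup (Equiv.Perm Ω)) : Prop :=
  Prec κ G₁ G₂ ∧ Prec κ G₂ G₁

/-- `G₁ ≼ G₂` (i.e. `≼_{ℵ₀}`, with `U` finite). -/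
def PrecF (G₁ G₂ : Subgroup (Equiv.Perm Ω)) : Prop :=
  ∃ U : Set (Equiv.Perm Ω), U.Finite ∧
    G₁ ≤ Subgroup.closure ((G₂ : Set (Equiv.Perm Ω)) ∪ U)

/-- `G₁ ≈ G₂` (i.e. `≈_{ℵ₀}`). -/
def ApproxF (G₁ G₂ : Subgroup (Equiv.Perm Ω)) : Prop :=
  PrecF G₁ G₂ ∧ PrecF G₂ G₁

/-- A generalized metric: a `[0,∞]`-valued metric. -/
structure IsGenMetric (d : Ω → Ω → ℝ≥0∞) : Prop where
  eq_zero_iff : ∀ α β, d α β = 0 ↔ α = β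
  symm : ∀ α β, d α β = d β α
  triangle : ∀ α β γ, d α γ ≤ d α β + d β γ

/-- Open ball for a generalized metric. -/
def gball (d : Ω → Ω → ℝ≥0∞) (α : Ω) (r : ℝ≥0∞) : Set Ω := {β | d α β < r}

/-- `(Ω, d)` is `κ`-uncrowded: every ball of finite radius has `< κ` elements. -/
def Uncrowded (κ : Cardinal.{u}) (d : Ω → Ω → ℝ≥0∞) : Prop :=
  ∀ (α : Ω) (r : ℝ≥0∞), r < ⊤ → #(gball d α r) < κ

/-- `(Ω, d)` is uniformly `κ`-uncrowded. -/
def UnifUncrowded (κ : Cardinal.{u}) (d : Ω → Ω → ℝ≥0∞) : Prop :=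
  ∀ r : ℝ≥0∞, r < ⊤ → ∃ lam : Cardinal.{u}, lam < κ ∧ ∀ α : Ω, #(gball d α r) ≤ lam

/-- `g` is bounded with respect to `d` : `‖g‖_d = ⨆ α, d α (αg) < ∞`. -/
def BoundedPerm (d : Ω → Ω → ℝ≥0∞) (g : Equiv.Perm Ω) : Prop :=
  (⨆ α : Ω, d α (g α)) < ⊤

/-- The function topology on `Sym(Ω)`: induced from the product topology on `Ω → Ω`
with `Ω` discrete. -/
def permTop (Ω : Type u) : TopologicalSpace (Equiv.Perm Ω) :=
  TopologicalSpace.induced (fun g : Equiv.Perm Ω => (g : Ω → Ω))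
    (@Pi.topologicalSpace Ω (fun _ => Ω) (fun _ => ⊥))

/-- `G` is closed in `Sym(Ω)` in the function topology. -/
def FTClosed (G : Subgroup (Equiv.Perm Ω)) : Prop :=
  @IsClosed _ (permTop Ω) (G : Set (Equiv.Perm Ω))

/-- `G` is discrete in the function topology. -/
def FTDiscrete (G : Subgroup (Equiv.Perm Ω)) : Prop :=
  @DiscreteTopology G
    (TopologicalSpace.induced (fun x : G => (x : Equiv.Perm Ω)) (permTop Ω))

/-- The orbit of `α` under a subgroup `H ≤ Sym(Ω)`. -/
def orb (H : Subgroup (Equiv.Perm Ω)) (α : Ω) : Set Ω := {β | ∃ g ∈ H, g α = β}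

/-- A partition of `Ω`: a set of disjoint nonempty subsets with union `Ω`. -/
def IsPartition (A : Set (Set Ω)) : Prop :=
  (∀ s ∈ A, s.Nonempty) ∧ A.PairwiseDisjoint id ∧ ⋃₀ A = Set.univ

/-- `A ∈ 𝒫`: a partition of `Ω` into finite subsets of unbounded cardinality. -/
def MemP (A : Set (Set Ω)) : Prop :=
  IsPartition A ∧ (∀ s ∈ A, s.Finite) ∧ ∀ n : ℕ, ∃ s ∈ A, (n : ℕ∞) < s.encard

/-- `A ∈ 𝒬`: a partition of `Ω` with a common finite bound on the cardinalities of
its members, infinitely many of which have more than one element. -/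
def MemQ (A : Set (Set Ω)) : Prop :=
  IsPartition A ∧ (∃ n : ℕ, ∀ s ∈ A, s.encard ≤ (n : ℕ∞)) ∧
    {s | s ∈ A ∧ 1 < s.encard}.Infinite

/-- The subgroup `FN(Ω,d)` of permutations of finite norm with respect to a
generalized metric `d`. -/
def FN (d : Ω → Ω → ℝ≥0∞) (hd : IsGenMetric d) : Subgroup (Equiv.Perm Ω) where
  carrier := {g | (⨆ α : Ω, d α (g α)) < ⊤}
  one_mem' := by
    have h : (⨆ α : Ω, d α ((1 : Equiv.Perm Ω) α)) ≤ 0 :=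
      iSup_le fun α => le_of_eq ((hd.eq_zero_iff α ((1 : Equiv.Perm Ω) α)).2 rfl)
    exact lt_of_le_of_lt h (by simp)
  mul_mem' := by
    intro a b ha hb
    have h : (⨆ α : Ω, d α ((a * b) α)) ≤
        (⨆ α : Ω, d α (b α)) + (⨆ α : Ω, d α (a α)) := by
      refine iSup_le fun α => ?_
      calc d α ((a * b) α) = d α (a (b α)) := by rw [Equiv.Perm.mul_apply]
        _ ≤ d α (b α) + d (b α) (a (b α)) := hd.triangle _ _ _
        _ ≤ _ := add_le_add (le_iSup (fun α : Ω => d α (b α)) α)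
              (le_iSup (fun β : Ω => d β (a β)) (b α))
    exact lt_of_le_of_lt h (ENNReal.add_lt_top.2 ⟨hb, ha⟩)
  inv_mem' := by
    intro a ha
    have h : (⨆ α : Ω, d α (a⁻¹ α)) ≤ ⨆ β : Ω, d β (a β) := by
      refine iSup_le fun α => ?_
      have e : d α (a⁻¹ α) = d (a⁻¹ α) (a (a⁻¹ α)) := by
        rw [show a (a⁻¹ α) = α from a.apply_symm_apply α]; exact hd.symm _ _
      rw [e]
      exact le_iSup (fun β : Ω => d β (a β)) (a⁻¹ α)
    exact lt_of_le_of_lt h ha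

/-!
If no finite `Γ` satisfies (i), then for every finite `Γ` infinitely many `Δ i` are moved by
elements of `G_(Γ)`. Hence any `g ∈ G` can be modified, without changing it on `Γ`, to move a new
`Δ i`, with a witness point that we add to `Γ`. Enumerating `Ω` and alternately adding the next
point to the domain and to the range of the already fixed part (back and forth), we obtain
`g_n ∈ G` converging pointwise to a permutation; it lies in `G` because `G` is closed, and it moves
every `Δ i` moved along the way. When the `Δ i` are finite, adding the finitely many exceptional
`Δ i` in (i) to `Γ` makes `G_(Γ)` fix every `Δ i`.
-/

open Equiv Set Filter

theorem Equiv.Perm.image_ne_self_iff (g : Perm Ω) (s : Set Ω) :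
    g '' s ≠ s ↔ ∃ β, ¬(β ∈ s ↔ g β ∈ s) := by
  rw [Ne, ← (preimage_injective.2 g.surjective).eq_iff, g.injective.preimage_image,
    Set.ext_iff, not_forall]
  simp only [mem_preimage]

theorem Equiv.Perm.exists_eventually_eq {ι : Type*} {l : Filter ι} [l.NeBot] (g : ι → Perm Ω)
    (hg : ∀ x, ∃ y, ∀ᶠ n in l, g n x = y) (hginv : ∀ x, ∃ y, ∀ᶠ n in l, (g n)⁻¹ x = y) :
    ∃ f : Perm Ω, ∀ x, ∀ᶠ n in l, g n x = f x := by
  choose F hF using hg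
  choose F' hF' using hginv
  have left_inv : Function.LeftInverse F' F := fun x => by
    obtain ⟨n, hn, hn'⟩ := ((hF x).and (hF' (F x))).exists
    rw [← hn', ← hn]
    simp
  have right_inv : Function.RightInverse F' F := fun x => by
    obtain ⟨n, hn, hn'⟩ := ((hF' x).and (hF (F' x))).exists
    rw [← hn', ← hn]
    simp
  exact ⟨⟨F, F', left_inv, right_inv⟩, hF⟩

theorem FTClosed.mem_of_eventually_eq {G : Subgroup (Perm Ω)} (hG : FTClosed G) {ι : Type*}
    {l : Filter ι} [l.NeBot] {g : ι → Perm Ω} (hgG : ∀ᶠ n in l, g n ∈ G) {f : Perm Ω}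
    (hgf : ∀ x, ∀ᶠ n in l, g n x = f x) : f ∈ G := by
  let : TopologicalSpace Ω := ⊥
  have : DiscreteTopology Ω := ⟨rfl⟩
  refine @IsClosed.mem_of_tendsto _ (permTop Ω) _ _ _ _ _ _ hG ?_ hgG
  rw [permTop, nhds_induced, tendsto_comap_iff, tendsto_pi_nhds]
  simpa only [nhds_discrete, tendsto_pure, Function.comp_apply] using hgf

theorem pstab_anti (G : Subgroup (Perm Ω)) {s t : Set Ω} (hst : s ⊆ t) :
    pstab G t ≤ pstab G s :=
  fun _ hg => ⟨hg.1, fun x hx => hg.2 x (hst hx)⟩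

section Construction

variable {I : Type*} {G : Subgroup (Perm Ω)} {Δ : I → Set Ω}

/-- If `k` fixes `Γ` pointwise and moves `Δ i`, then `g` or `g * k` moves `Δ i`; both agree with
`g` on `Γ`. -/
theorem exists_eqOn_image_ne_of_infinite {Γ : Set Ω}
    (hmoved : {i | ∃ k ∈ pstab G Γ, k '' Δ i ≠ Δ i}.Infinite) {g : Perm Ω} (hg : g ∈ G)
    (S : Finset I) : ∃ g' ∈ G, EqOn g' g Γ ∧ ∃ i ∉ S, g' '' Δ i ≠ Δ i := by
  obtain ⟨i, ⟨k, hk, hki⟩, hiS⟩ := hmoved.exists_notMem_finset S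
  by_cases hgi : g '' Δ i = Δ i
  · refine ⟨g * k, G.mul_mem hg hk.1, fun x hx => congrArg g (hk.2 x hx), i, hiS, ?_⟩
    refine fun h => hki (image_injective.2 g.injective ?_)
    rw [← image_comp, ← Perm.coe_mul, h, hgi]
  · exact ⟨g, hg, eqOn_refl _ _, i, hiS, hgi⟩

variable (G Δ) in
/-- A finite stage of the back-and-forth construction: later stages agree with `g` on `Γ`. -/
structure Stage where
  g : Perm Ω
  mem : g ∈ G
  Γ : Finset Ω
  S : Finset I
  moves : ∀ i ∈ S, ∃ β ∈ Γ, ¬(β ∈ Δ i ↔ g β ∈ Δ i)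

namespace Stage

instance : Preorder (Stage G Δ) where
  le a b := a.Γ ⊆ b.Γ ∧ EqOn b.g a.g a.Γ ∧ a.S ⊆ b.S
  le_refl a := ⟨subset_rfl, eqOn_refl _ _, subset_rfl⟩
  le_trans a b c hab hbc :=
    ⟨hab.1.trans hbc.1, (hbc.2.1.mono hab.1).trans hab.2.1, hab.2.2.trans hbc.2.2⟩

instance : Inhabited (Stage G Δ) := ⟨⟨1, G.one_mem, ∅, ∅, by simp⟩⟩

theorem exists_le (hmoved : ∀ Γ : Set Ω, Γ.Finite →
      {i | ∃ k ∈ pstab G Γ, k '' Δ i ≠ Δ i}.Infinite) (a : Stage G Δ) (x : Ω) :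
    ∃ b, a ≤ b ∧ x ∈ b.Γ ∧ b.g⁻¹ x ∈ b.Γ ∧ a.S.card < b.S.card := by
  classical
  obtain ⟨g', hg', hg'a, i, hiS, hi⟩ :=
    exists_eqOn_image_ne_of_infinite (hmoved a.Γ a.Γ.finite_toSet) a.mem a.S
  obtain ⟨β, hβ⟩ := (g'.image_ne_self_iff _).1 hi
  have moves : ∀ j ∈ insert i a.S, ∃ γ ∈ a.Γ ∪ {x, g'⁻¹ x, β}, ¬(γ ∈ Δ j ↔ g' γ ∈ Δ j) := by
    intro j hj
    obtain rfl | hj := Finset.mem_insert.1 hj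
    · exact ⟨β, by simp, hβ⟩
    · obtain ⟨γ, hγ, hγj⟩ := a.moves j hj
      exact ⟨γ, Finset.mem_union_left _ hγ, by rwa [hg'a hγ]⟩
  refine ⟨⟨g', hg', _, _, moves⟩, ⟨Finset.subset_union_left, hg'a, Finset.subset_insert _ _⟩,
    by simp, by simp, ?_⟩
  simp [Finset.card_insert_of_notMem hiS]

theorem apply_eq_of_le {a b : Stage G Δ} (hab : a ≤ b) {x : Ω} (hx : x ∈ a.Γ) : b.g x = a.g x :=
  hab.2.1 hx

theorem inv_apply_eq_of_le {a b : Stage G Δ} (hab : a ≤ b) {x : Ω} (hx : a.g⁻¹ x ∈ a.Γ) :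
    b.g⁻¹ x = a.g⁻¹ x := by
  rw [Perm.inv_eq_iff_eq, apply_eq_of_le hab hx]
  simp

end Stage

theorem exists_mem_infinite_image_ne [Countable Ω] (hG : FTClosed G)
    (hmoved : ∀ Γ : Set Ω, Γ.Finite → {i | ∃ k ∈ pstab G Γ, k '' Δ i ≠ Δ i}.Infinite) :
    ∃ g ∈ G, {i | g '' Δ i ≠ Δ i}.Infinite := by
  have : Nonempty Ω := by
    obtain ⟨i, k, -, hi⟩ := (hmoved ∅ finite_empty).nonempty
    obtain ⟨β, -⟩ := (Perm.image_ne_self_iff _ _).1 hi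
    exact ⟨β⟩
  obtain ⟨e, he⟩ := exists_surjective_nat Ω
  choose next hle hmem hinv hcard using Stage.exists_le hmoved
  let a : ℕ → Stage G Δ := fun n => Nat.rec default (fun n b => next b (e n)) n
  have ha : Monotone a := monotone_nat_of_le_succ fun n => hle _ _
  have hdom (x : Ω) : ∃ n, x ∈ (a n).Γ ∧ (a n).g⁻¹ x ∈ (a n).Γ := by
    obtain ⟨n, rfl⟩ := he x
    exact ⟨n + 1, hmem _ _, hinv _ _⟩
  have hcard_ge (n : ℕ) : n ≤ (a n).S.card := by
    induction n with
    | zero => exact Nat.zero_le _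
    | succ n ih => exact ih.trans_lt (hcard _ _)
  obtain ⟨f, hf⟩ := Perm.exists_eventually_eq (l := atTop) (fun n => (a n).g)
    (fun x => by
      obtain ⟨n, hx, -⟩ := hdom x
      exact ⟨_, eventually_atTop.2 ⟨n, fun m hm => Stage.apply_eq_of_le (ha hm) hx⟩⟩)
    (fun x => by
      obtain ⟨n, -, hx⟩ := hdom x
      exact ⟨_, eventually_atTop.2 ⟨n, fun m hm => Stage.inv_apply_eq_of_le (ha hm) hx⟩⟩)
  have hfa (n : ℕ) : EqOn f (a n).g (a n).Γ := fun x hx => by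
    obtain ⟨m, hm, hmf⟩ := ((eventually_ge_atTop n).and (hf x)).exists
    rw [← hmf, Stage.apply_eq_of_le (ha hm) hx]
  have hS (n : ℕ) : ↑(a n).S ⊆ {i | f '' Δ i ≠ Δ i} := fun i hi => by
    obtain ⟨β, hβ, hβi⟩ := (a n).moves i hi
    exact (f.image_ne_self_iff _).2 ⟨β, by rwa [hfa n hβ]⟩
  refine ⟨f, hG.mem_of_eventually_eq (.of_forall fun n => (a n).mem) hf, fun hfin => ?_⟩
  have := Finset.card_le_card (hfin.subset_toFinset.2 (hS (hfin.toFinset.card + 1)))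
  have := hcard_ge (hfin.toFinset.card + 1)
  omega

theorem exists_finite_forall_image_eq (hΔ : ∀ i, (Δ i).Finite) {Γ : Set Ω} (hΓ : Γ.Finite)
    (hmoved : {i | ∃ g ∈ pstab G Γ, g '' Δ i ≠ Δ i}.Finite) :
    ∃ Γ' : Set Ω, Γ'.Finite ∧ ∀ g ∈ pstab G Γ', ∀ i, g '' Δ i = Δ i := by
  refine ⟨Γ ∪ ⋃ i ∈ {i | ∃ g ∈ pstab G Γ, g '' Δ i ≠ Δ i}, Δ i,
    hΓ.union (hmoved.biUnion fun i _ => hΔ i), fun g hg i => ?_⟩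
  by_contra hi
  have hgΓ : g ∈ pstab G Γ := pstab_anti G subset_union_left hg
  exact hi (EqOn.image_eq_self fun x hx =>
    hg.2 x (subset_union_right (mem_biUnion ⟨g, hgΓ, hi⟩ hx)))

end Construction

/-- Lemma 11.2. -/
theorem stmt18 {Ω : Type u} [Countable Ω] {I : Type*} (G : Subgroup (Equiv.Perm Ω))
    (hG : FTClosed G) (Δ : I → Set Ω) :
    ((∃ Γ : Set Ω, Γ.Finite ∧
        {i : I | ∃ g ∈ pstab G Γ, (g : Ω → Ω) '' Δ i ≠ Δ i}.Finite) ∨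
      (∃ g ∈ G, {i : I | (g : Ω → Ω) '' Δ i ≠ Δ i}.Infinite)) ∧
    ((∀ i, (Δ i).Finite) →
      ((∃ Γ : Set Ω, Γ.Finite ∧
          ∀ g ∈ pstab G Γ, ∀ i : I, (g : Ω → Ω) '' Δ i = Δ i) ∨
        (∃ g ∈ G, {i : I | (g : Ω → Ω) '' Δ i ≠ Δ i}.Infinite))) := by
  have dichotomy : (∃ Γ : Set Ω, Γ.Finite ∧ {i | ∃ g ∈ pstab G Γ, g '' Δ i ≠ Δ i}.Finite) ∨
      ∃ g ∈ G, {i | g '' Δ i ≠ Δ i}.Infinite := or_iff_not_imp_left.2 fun h =>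
    exists_mem_infinite_image_ne hG fun Γ hΓ hfin => h ⟨Γ, hΓ, hfin⟩
  exact ⟨dichotomy, fun hΔ =>
    dichotomy.imp (fun ⟨_, hΓ, hfin⟩ => exists_finite_forall_image_eq hΔ hΓ hfin) id⟩
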